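/- arXiv:1108.1288 — 2 statements merged into one kernel-verified Lean document; each statement's English description precedes it below -/
import Mathlib

section
/- For indices with i ≠ σ(j), i ≠ j, and a, b ∈ R, the symplectic elementary generators satisfy the commutator relation [se_{ij}(a), se_{j,σ(i)}(b)] = se_{i,σ(i)}(2ab). -/
/-!
Put `x = se i j a - 1` and `y = se j (σ i) b - 1`. Both square to zero, `x * y = e_{i,σ(i)}(ab)`
and `y * x = -(x * y)`: the sign comes from `(-1)^(j + σ i) = -(-1)^(i + j)`, since `σ` changes
parity. For any such pair in a ring, `[1 + x, 1 + y] = 1 + 2xy`, which is `se_{i,σ(i)}(2ab)`.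
-/

open Matrix

/-- The involution `σ` pairing `2i-1 ↔ 2i` (in 0-indexed form: `2i ↔ 2i+1`).
For even `m` this is exactly the permutation `σ(2i)=2i-1, σ(2i-1)=2i` of the paper. -/
def sesig {m : ℕ} (k : Fin m) : Fin m :=
  if h : (k : ℕ) % 2 = 0 ∧ (k : ℕ) + 1 < m then ⟨(k : ℕ) + 1, h.2⟩
  else ⟨(k : ℕ) - 1, by have := k.2; omega⟩

/-- The elementary symplectic generator `se_{ij}(z)`. -/
def se {m : ℕ} {R : Type*} [CommRing R] (i j : Fin m) (z : R) :
    Matrix (Fin m) (Fin m) R :=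
  if i = sesig j then 1 + Matrix.single i j z
  else 1 + Matrix.single i j z
    - (-1 : R) ^ ((i : ℕ) + (j : ℕ)) • Matrix.single (sesig j) (sesig i) z

/-- The standard symplectic form `ψₙ = Σ e_{2i-1,2i} - Σ e_{2i,2i-1}`. -/
def psi {m : ℕ} (R : Type*) [CommRing R] : Matrix (Fin m) (Fin m) R :=
  Matrix.of fun k l => if l = sesig k then (if (k : ℕ) % 2 = 0 then 1 else -1) else 0

lemma sesig_val {n : ℕ} (k : Fin (2 * n)) :
    (sesig k : ℕ) = if (k : ℕ) % 2 = 0 then (k : ℕ) + 1 else (k : ℕ) - 1 := by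
  unfold sesig
  split_ifs <;> simp_all; omega

lemma sesig_involutive {n : ℕ} : Function.Involutive (sesig (m := 2 * n)) := fun k => by
  have h₁ := sesig_val k
  have h₂ := sesig_val (sesig k)
  ext
  split_ifs at h₁ h₂ <;> omega

lemma sesig_ne_self {n : ℕ} (k : Fin (2 * n)) : sesig k ≠ k := fun h => by
  have := sesig_val k
  rw [h] at this
  split_ifs at this <;> omega

lemma neg_one_pow_add_sesig {n : ℕ} {R : Type*} [Ring R] (i j : Fin (2 * n)) :
    (-1 : R) ^ ((j : ℕ) + (sesig i : ℕ)) = -(-1 : R) ^ ((i : ℕ) + (j : ℕ)) := by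
  have hσ := sesig_val i
  have hi := i.2
  calc (-1 : R) ^ ((j : ℕ) + (sesig i : ℕ)) = (-1 : R) ^ ((i : ℕ) + (j : ℕ) + 1) := by
        rw [neg_one_pow_eq_pow_mod_two, neg_one_pow_eq_pow_mod_two (n := (i : ℕ) + j + 1)]
        split_ifs at hσ <;> congr 1 <;> omega
    _ = -(-1 : R) ^ ((i : ℕ) + (j : ℕ)) := by rw [pow_succ, mul_neg_one]

lemma Units.val_inv_eq_one_sub {S : Type*} [Ring S] {u : Sˣ} {x : S} (hu : (u : S) = 1 + x)
    (hx : x * x = 0) : ((u⁻¹ : Sˣ) : S) = 1 - x :=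
  Units.inv_eq_of_mul_eq_one_right <| by
    rw [hu, show (1 + x) * (1 - x) = 1 - x * x by noncomm_ring, hx, sub_zero]

lemma Units.val_commutator_of_sq_eq_zero {S : Type*} [Ring S] {u v : Sˣ} {x y : S}
    (hu : (u : S) = 1 + x) (hv : (v : S) = 1 + y) (hx : x * x = 0) (hy : y * y = 0)
    (hyx : y * x = -(x * y)) :
    ((u * v * u⁻¹ * v⁻¹ : Sˣ) : S) = 1 + 2 • (x * y) := by
  have hxyx : x * y * x = 0 := by
    rw [mul_assoc, hyx, mul_neg, ← mul_assoc, hx, zero_mul, neg_zero]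
  have hxyy : x * y * y = 0 := by rw [mul_assoc, hy, mul_zero]
  simp only [Units.val_mul, hu, hv, Units.val_inv_eq_one_sub hu hx,
    Units.val_inv_eq_one_sub hv hy, mul_add, add_mul, mul_sub, sub_mul, mul_one, one_mul, hx, hy,
    hyx, hxyx, hxyy, zero_mul, neg_mul, neg_zero]
  abel

section se

variable {n : ℕ} {R : Type*} [CommRing R] {i j : Fin (2 * n)}

lemma se_sub_one_of_ne_sesig (h : i ≠ sesig j) (z : R) :
    se i j z - 1 =
      single i j z - (-1 : R) ^ ((i : ℕ) + (j : ℕ)) • single (sesig j) (sesig i) z := by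
  rw [se, if_neg h, add_sub_assoc, add_sub_cancel_left]

lemma se_sesig (i : Fin (2 * n)) (z : R) : se i (sesig i) z = 1 + single i (sesig i) z := by
  rw [se, if_pos (sesig_involutive i).symm]

lemma se_sub_one_mul_self (h : i ≠ j) (z : R) : (se i j z - 1) * (se i j z - 1) = 0 := by
  by_cases hσ : i = sesig j
  · obtain rfl : j = sesig i := by rw [hσ, sesig_involutive]
    rw [se_sesig, add_sub_cancel_left]
    simp [sesig_ne_self]
  · have hσσ : sesig i ≠ sesig j := sesig_involutive.injective.ne h
    rw [se_sub_one_of_ne_sesig hσ]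
    simp [sub_mul, mul_sub, h.symm, (sesig_ne_self j).symm, sesig_ne_self, hσσ]

lemma se_sub_one_mul_se_sesig_sub_one (hij : i ≠ j) (hσ : i ≠ sesig j) (a b : R) :
    (se i j a - 1) * (se j (sesig i) b - 1) = single i (sesig i) (a * b) := by
  have hσ' : sesig i ≠ j := fun h => hσ (sesig_involutive.eq_iff.1 h)
  rw [se_sub_one_of_ne_sesig hσ, se_sub_one_of_ne_sesig (by rwa [sesig_involutive, ne_comm]),
    sesig_involutive, neg_one_pow_add_sesig]
  simp [sub_mul, mul_add, hij.symm, sesig_ne_self, hσ']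

lemma se_sesig_sub_one_mul_se_sub_one (hij : i ≠ j) (hσ : i ≠ sesig j) (a b : R) :
    (se j (sesig i) b - 1) * (se i j a - 1) = -single i (sesig i) (a * b) := by
  have hσσ : sesig i ≠ sesig j := sesig_involutive.injective.ne hij
  have hε : (-1 : R) ^ ((i : ℕ) + (j : ℕ)) * (-1) ^ ((i : ℕ) + (j : ℕ)) = 1 := by
    rw [← pow_add, Even.neg_one_pow ⟨_, rfl⟩]
  rw [se_sub_one_of_ne_sesig hσ, se_sub_one_of_ne_sesig (by rwa [sesig_involutive, ne_comm]),
    sesig_involutive, neg_one_pow_add_sesig]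
  simp only [neg_smul, sub_neg_eq_add, add_mul, mul_sub, smul_mul_assoc, mul_smul_comm,
    single_mul_single_same, single_mul_single_of_ne (h := sesig_ne_self i) ..,
    single_mul_single_of_ne (h := hσσ) .., single_mul_single_of_ne (h := hσ.symm) .., smul_zero,
    add_zero, zero_add, zero_sub, smul_smul, hε, one_smul, mul_comm b a]

end se

/-- `[se_{ij}(a), se_{j,σ(i)}(b)] = se_{i,σ(i)}(2ab)` for `i ≠ σ(j)`, `i ≠ j`. -/
theorem se_commutator_rel12 {n : ℕ} {R : Type*} [CommRing R]
    (i j : Fin (2 * n)) (hij : i ≠ j) (hisj : i ≠ sesig j) (a b : R)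
    (u v : (Matrix (Fin (2 * n)) (Fin (2 * n)) R)ˣ)
    (hu : (u : Matrix (Fin (2 * n)) (Fin (2 * n)) R) = se i j a)
    (hv : (v : Matrix (Fin (2 * n)) (Fin (2 * n)) R) = se j (sesig i) b) :
    ((u * v * u⁻¹ * v⁻¹ : (Matrix (Fin (2 * n)) (Fin (2 * n)) R)ˣ) :
        Matrix (Fin (2 * n)) (Fin (2 * n)) R) = se i (sesig i) (2 * a * b) := by
  have hjσ : j ≠ sesig i := fun h => hisj (sesig_involutive.eq_iff.1 h.symm)
  rw [Units.val_commutator_of_sq_eq_zero (by rw [hu, add_sub_cancel]) (by rw [hv, add_sub_cancel])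
      (se_sub_one_mul_self hij a) (se_sub_one_mul_self hjσ b)
      (by rw [se_sesig_sub_one_mul_se_sub_one hij hisj, se_sub_one_mul_se_sesig_sub_one hij hisj]),
    se_sub_one_mul_se_sesig_sub_one hij hisj, se_sesig, mul_assoc, two_mul (a * b), single_add,
    two_nsmul]
end

section
/- Over a local ring R, every unimodular row v ∈ Umₙ(R, I) (i.e., v ≡ e₁ mod I) satisfies v = e₁·β for some β ∈ Eₙ(R, I). -/
/-!
Write `v₁ = 1 + a` with `a ∈ I`. If `v₁` is a unit, conjugating `E₁₂(a)` by `E₂₁(-1)` moves `e₁`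
to `(1 + a, a, 0, …, 0)`, which agrees with `v` in the unit first entry and is congruent to it
modulo `I`; adding `I`-multiples of the first entry to the others then reaches `v`. Otherwise,
`R` being local, some other entry `v_k` of the unimodular row is a unit; as `v_k ∈ I`, this forces
`I = R`, and `e₁ E₁ₖ(v_k)` reaches `v` by the same operations, now adding multiples of entry `k`.
-/

open Matrix

/-- The subgroup of `GL_n(R)` generated by the elementary matrices `I + z·e_{ij}`
with `z ∈ S`, `i ≠ j`. -/
def elemSub {m : ℕ} {R : Type*} [CommRing R] (S : Set R) :
    Subgroup (Matrix (Fin m) (Fin m) R)ˣ :=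
  Subgroup.closure {u | ∃ i j, ∃ z ∈ S, i ≠ j ∧
    (u : Matrix (Fin m) (Fin m) R) = 1 + Matrix.single i j z}

/-- The relative elementary group `E_n(R, I)`: the normal closure of `E_n(I)` in `E_n(R)`. -/
def elemRel {m : ℕ} {R : Type*} [CommRing R] (I : Ideal R) :
    Subgroup (Matrix (Fin m) (Fin m) R)ˣ :=
  Subgroup.closure {x | ∃ g ∈ elemSub (m := m) (Set.univ : Set R),
    ∃ h ∈ elemSub (m := m) (I : Set R), x = g * h * g⁻¹}

theorem IsLocalRing.exists_isUnit_of_dotProduct_eq_one {R ι : Type*} [CommSemiring R]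
    [IsLocalRing R] [Fintype ι] {v w : ι → R} (h : v ⬝ᵥ w = 1) : ∃ i, IsUnit (v i) := by
  obtain ⟨i, -, hi⟩ := exists_of_isUnit_sum (s := Finset.univ) (f := fun i => v i * w i)
    (by rw [← dotProduct, h]; exact isUnit_one)
  exact ⟨i, isUnit_of_mul_isUnit_left hi⟩

section Transvection

variable {ι R : Type*} [Fintype ι] [DecidableEq ι] [CommRing R]

theorem vecMul_transvection (x : ι → R) (i j : ι) (c : R) :
    x ᵥ* transvection i j c = x + Pi.single j (x i * c) := by
  rw [transvection, vecMul_add, vecMul_one]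
  congr 1
  ext k
  simp [vecMul, dotProduct, single_apply, Pi.single_apply, eq_comm, ite_and]

def transvectionUnit {i j : ι} (hij : i ≠ j) (c : R) : (Matrix ι ι R)ˣ where
  val := transvection i j c
  inv := transvection i j (-c)
  val_inv := by rw [transvection_mul_transvection_same _ _ hij, add_neg_cancel, transvection_zero]
  inv_val := by rw [transvection_mul_transvection_same _ _ hij, neg_add_cancel, transvection_zero]

@[simp]
theorem coe_transvectionUnit {i j : ι} (hij : i ≠ j) (c : R) :
    (transvectionUnit hij c : Matrix ι ι R) = transvection i j c :=
  rfl

theorem single_vecMul_conj_transvection {i j : ι} (hij : i ≠ j) (a : R) :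
    Pi.single i 1 ᵥ* (transvection j i (-1) * transvection i j a * transvection j i 1) =
      Pi.single i (1 + a) + Pi.single j a := by
  simp only [← vecMul_vecMul, vecMul_transvection, Pi.single_eq_of_ne hij.symm]
  ext k
  by_cases hki : k = i
  · subst hki; simp [hij]
  · by_cases hkj : k = j
    · subst hkj; simp [hki]
    · simp [hki, hkj]

end Transvection

section Elementary

variable {m : ℕ} {R : Type*} [CommRing R]

theorem transvectionUnit_mem_elemSub {S : Set R} {i j : Fin m} (hij : i ≠ j) {c : R}
    (hc : c ∈ S) : transvectionUnit hij c ∈ elemSub S :=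
  Subgroup.subset_closure ⟨i, j, c, hc, hij, rfl⟩

theorem elemSub_le_elemRel (I : Ideal R) : elemSub (m := m) (I : Set R) ≤ elemRel I :=
  Subgroup.closure_le _ |>.2 fun u hu =>
    Subgroup.subset_closure ⟨1, one_mem _, u, Subgroup.subset_closure hu, by simp⟩

theorem exists_mem_elemSub_vecMul_eq (J : Ideal R) {x y : Fin m → R} {k : Fin m}
    (hk : IsUnit (x k)) (hyk : y k = x k) (hxy : ∀ j, j ≠ k → y j - x j ∈ J) :
    ∃ β ∈ elemSub (m := m) (J : Set R), x ᵥ* (β : Matrix (Fin m) (Fin m) R) = y := by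
  suffices ∀ s : Finset (Fin m),
      ∃ β ∈ elemSub (m := m) (J : Set R), x ᵥ* (β : Matrix (Fin m) (Fin m) R) = s.piecewise y x by
    simpa using this Finset.univ
  intro s
  induction s using Finset.induction_on with
  | empty => exact ⟨1, one_mem _, by simp⟩
  | insert j s hjs ih =>
    obtain ⟨β, hβ, hxβ⟩ := ih
    by_cases hjk : j = k
    · subst hjk
      refine ⟨β, hβ, hxβ.trans ?_⟩
      rw [Finset.piecewise_insert, hyk, eq_comm, Function.update_eq_self_iff]
      simp [hjs]
    · have hck : (s.piecewise y x) k = x k := by by_cases hks : k ∈ s <;> simp [hks, hyk]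
      refine ⟨β * transvectionUnit (Ne.symm hjk) (hk.unit⁻¹ * (y j - x j)),
        mul_mem hβ (transvectionUnit_mem_elemSub _ (J.mul_mem_left _ (hxy j hjk))), ?_⟩
      rw [Units.val_mul, coe_transvectionUnit, ← vecMul_vecMul, hxβ, vecMul_transvection]
      ext i
      by_cases hij : i = j
      · subst hij; simp [hck, hjs, ← mul_assoc]
      · simp [hij]

theorem exists_mem_elemRel_single_vecMul_eq_of_isUnit (I : Ideal R) {v : Fin m → R}
    {i j : Fin m} (hij : i ≠ j) (hvi : IsUnit (v i)) (hvi1 : v i - 1 ∈ I)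
    (hv : ∀ k, k ≠ i → v k ∈ I) :
    ∃ β ∈ elemRel (m := m) I, Pi.single i 1 ᵥ* (β : Matrix (Fin m) (Fin m) R) = v := by
  set a := v i - 1
  set γ := transvectionUnit hij.symm (-1) * transvectionUnit hij a *
    (transvectionUnit hij.symm (-1))⁻¹
  have hγ : γ ∈ elemRel I := Subgroup.subset_closure
    ⟨_, transvectionUnit_mem_elemSub _ (Set.mem_univ _), _,
      transvectionUnit_mem_elemSub _ hvi1, rfl⟩
  have hγv : Pi.single i 1 ᵥ* (γ : Matrix (Fin m) (Fin m) R) =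
      Pi.single i (1 + a) + Pi.single j a := by
    rw [← single_vecMul_conj_transvection hij]
    simp [γ, transvectionUnit]
  obtain ⟨β, hβ, hβv⟩ := exists_mem_elemSub_vecMul_eq I (x := Pi.single i (1 + a) + Pi.single j a)
    (y := v) (k := i) (by simpa [hij.symm, a] using hvi) (by simp [hij.symm, a]) fun k hk => by
      by_cases hkj : k = j
      · subst hkj; simpa [hk, a] using I.sub_mem (hv k hk) hvi1
      · simpa [hk, hkj] using hv k hk
  refine ⟨γ * β, mul_mem hγ (elemSub_le_elemRel I hβ), ?_⟩
  rw [Units.val_mul, ← vecMul_vecMul, hγv, hβv]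

theorem exists_mem_elemSub_top_single_vecMul_eq_of_isUnit {v : Fin m → R} {i k : Fin m}
    (hik : i ≠ k) (hvk : IsUnit (v k)) :
    ∃ β ∈ elemSub (m := m) ((⊤ : Ideal R) : Set R),
      Pi.single i 1 ᵥ* (β : Matrix (Fin m) (Fin m) R) = v := by
  obtain ⟨β, hβ, hβv⟩ := exists_mem_elemSub_vecMul_eq ⊤
    (x := Pi.single i 1 + Pi.single k (v k)) (y := v) (k := k)
    (by simpa [hik.symm] using hvk) (by simp [hik.symm]) fun _ _ => Submodule.mem_top
  refine ⟨transvectionUnit hik (v k) * β,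
    mul_mem (transvectionUnit_mem_elemSub _ Submodule.mem_top) hβ, ?_⟩
  rw [Units.val_mul, coe_transvectionUnit, ← vecMul_vecMul, vecMul_transvection,
    Pi.single_eq_same, one_mul, hβv]

end Elementary

/-- Over a local ring, every unimodular row `v ∈ Um_n(R, I)` (i.e. `v ≡ e₁ mod I`)
satisfies `v = e₁ · β` for some `β ∈ E_n(R, I)`, for `n ≥ 2`. -/
theorem unimodular_relative_elementary_orbit {n : ℕ} {R : Type*} [CommRing R]
    [IsLocalRing R] (hn : 2 ≤ n) (I : Ideal R) (v : Fin n → R)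
    (hunim : ∃ w, v ⬝ᵥ w = 1)
    (hcong0 : v ⟨0, by omega⟩ - 1 ∈ I)
    (hcong : ∀ k : Fin n, k ≠ ⟨0, by omega⟩ → v k ∈ I) :
    ∃ β ∈ elemRel (m := n) I,
      Matrix.vecMul (Pi.single (⟨0, by omega⟩ : Fin n) 1)
        (β : Matrix (Fin n) (Fin n) R) = v := by
  by_cases hv0 : IsUnit (v ⟨0, by omega⟩)
  · exact exists_mem_elemRel_single_vecMul_eq_of_isUnit I (j := ⟨1, by omega⟩)
      (by simp [Fin.ext_iff]) hv0 hcong0 hcong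
  · obtain ⟨w, hw⟩ := hunim
    obtain ⟨k, hk⟩ := IsLocalRing.exists_isUnit_of_dotProduct_eq_one hw
    have hk0 : k ≠ ⟨0, by omega⟩ := by rintro rfl; exact hv0 hk
    obtain rfl : I = ⊤ := Ideal.eq_top_of_isUnit_mem _ (hcong k hk0) hk
    obtain ⟨β, hβ, hβv⟩ := exists_mem_elemSub_top_single_vecMul_eq_of_isUnit hk0.symm hk
    exact ⟨β, elemSub_le_elemRel ⊤ hβ, hβv⟩
end
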